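/- There exists a constant C > 0 such that for every integer p_1 ≥ 1, ∑_{k=0}^{p_1-1} C(p_1-1, k) · (k-2)! · (p_1-2-k)! ≤ C · (p_1-2)!, where C(n,k) denotes the binomial coefficient and m! = 1 for negative integers m. -/

import Mathlib

/-- Extended factorial: `m! = 1` for negative integers `m`. -/
def efact (m : ℤ) : ℕ := if m < 0 then 1 else Nat.factorial m.toNat

/-!
Write `n = p₁ - 1`. For `2 ≤ k < n` the summand equals
`(n-1)! · (1 / (k (k-1)) + 1 / ((k-1)(n-k)))`. The first parts telescope to at most `1`,
and each second part is at most `2 / (n-1)` because `a + b ≤ 2ab` for `a, b ≥ 1`, so these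
summands add up to at most `3 (n-1)!`. The boundary summands `k = 0, 1, n` are `(n-1)!`,
`n (n-2)!` and `(n-2)!`, together at most `4 (n-1)!`; hence `C = 7` works.
-/

open Finset Nat

lemma efact_natCast (m : ℕ) : efact m = m ! := by
  simp [efact]

lemma efact_of_neg {m : ℤ} (h : m < 0) : efact m = 1 := if_pos h

lemma one_div_mul_le_two_div_add {a b : ℝ} (ha : 1 ≤ a) (hb : 1 ≤ b) :
    1 / (a * b) ≤ 2 / (a + b) := by
  rw [div_le_div_iff₀ (by positivity) (by positivity)]
  nlinarith

lemma sum_range_one_div_succ_mul_succ_succ (N : ℕ) :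
    ∑ i ∈ range N, 1 / ((i + 1) * (i + 2) : ℝ) = 1 - 1 / (N + 1) := by
  induction N with
  | zero => simp
  | succ N ih =>
    rw [sum_range_succ, ih]
    push_cast
    field_simp
    ring

lemma cast_choose_mul_factorial_mul_factorial (i j : ℕ) :
    ((i + j + 3).choose (i + 2) * i ! * j ! : ℝ) =
      (i + j + 2)! * (1 / ((i + 1) * (i + 2)) + 1 / ((i + 1) * (j + 1))) := by
  have h := Nat.choose_mul_factorial_mul_factorial (show i + 2 ≤ i + j + 3 by omega)
  rw [show i + j + 3 - (i + 2) = j + 1 by omega] at h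
  have h' : ((i + j + 3).choose (i + 2) : ℝ) * (i + 2)! * (j + 1)! = (i + j + 3)! := by
    exact_mod_cast h
  simp only [Nat.factorial_succ, Nat.cast_mul, Nat.cast_add, Nat.cast_one, Nat.cast_ofNat] at h' ⊢
  field_simp
  linear_combination h'

lemma cast_choose_mul_factorial_mul_factorial_le {N i : ℕ} (hi : i < N) :
    ((N + 2).choose (i + 2) * i ! * (N - 1 - i)! : ℝ) ≤
      (N + 1)! * (1 / ((i + 1) * (i + 2)) + 2 / (N + 1)) := by
  obtain ⟨j, rfl⟩ : ∃ j, N = i + j + 1 := ⟨N - 1 - i, by omega⟩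
  have hij : 1 / ((i + 1) * (j + 1) : ℝ) ≤ 2 / (i + j + 2) := by
    convert one_div_mul_le_two_div_add (a := i + 1) (b := j + 1) (by simp) (by simp) using 2
    ring
  rw [show i + j + 1 - 1 - i = j by omega, show i + j + 1 + 2 = i + j + 3 by ring,
    cast_choose_mul_factorial_mul_factorial]
  calc ((i + j + 2)! : ℝ) * (1 / ((i + 1) * (i + 2)) + 1 / ((i + 1) * (j + 1)))
      ≤ (i + j + 2)! * (1 / ((i + 1) * (i + 2)) + 2 / (i + j + 2)) := by gcongr ?_ * (_ + ?_)
    _ = _ := by push_cast; ring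

lemma sum_range_choose_mul_factorial_mul_factorial_le (N : ℕ) :
    ∑ i ∈ range N, ((N + 2).choose (i + 2) * i ! * (N - 1 - i)! : ℝ) ≤ 3 * (N + 1)! := by
  calc ∑ i ∈ range N, ((N + 2).choose (i + 2) * i ! * (N - 1 - i)! : ℝ)
      ≤ ∑ i ∈ range N, (N + 1)! * (1 / ((i + 1) * (i + 2)) + 2 / (N + 1) : ℝ) :=
        sum_le_sum fun i hi => cast_choose_mul_factorial_mul_factorial_le (mem_range.1 hi)
    _ = (N + 1)! * (1 - 1 / (N + 1) + N * (2 / (N + 1))) := by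
        rw [← mul_sum, sum_add_distrib, sum_const, card_range, nsmul_eq_mul,
          sum_range_one_div_succ_mul_succ_succ]
    _ ≤ (N + 1)! * 3 := by
        gcongr
        field_simp
        linarith
    _ = 3 * (N + 1)! := mul_comm _ _

/-- There is a constant `C > 0` such that for every `p₁ ≥ 1`,
`∑_{k=0}^{p₁-1} C(p₁-1,k) (k-2)! (p₁-2-k)! ≤ C (p₁-2)!`,
with the convention `m! = 1` for negative `m`. -/
theorem binom_efact_sum_le : ∃ C : ℝ, 0 < C ∧ ∀ p₁ : ℕ, 1 ≤ p₁ →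
    ∑ k ∈ Finset.range p₁,
        (Nat.choose (p₁ - 1) k : ℝ) * (efact ((k : ℤ) - 2) : ℝ) *
          (efact ((p₁ : ℤ) - 2 - (k : ℤ)) : ℝ)
      ≤ C * (efact ((p₁ : ℤ) - 2) : ℝ) := by
  refine ⟨7, by norm_num, fun p₁ hp₁ => ?_⟩
  obtain rfl | rfl | ⟨N, rfl⟩ : p₁ = 1 ∨ p₁ = 2 ∨ ∃ N, p₁ = N + 3 := by
    rcases p₁ with _ | _ | _ | N <;> simp_all
  · norm_num [efact]
  · norm_num [sum_range_succ, efact]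
  have hmiddle : ∀ i ∈ range N,
      ((N + 3 - 1).choose (i + 1 + 1) : ℝ) * efact (((i + 1 + 1 : ℕ) : ℤ) - 2) *
          efact (((N + 3 : ℕ) : ℤ) - 2 - ((i + 1 + 1 : ℕ) : ℤ)) =
        ((N + 2).choose (i + 2) * i ! * (N - 1 - i)! : ℝ) := by
    intro i hi
    have hiN := mem_range.1 hi
    rw [show ((i + 1 + 1 : ℕ) : ℤ) - 2 = (i : ℕ) by push_cast; ring,
      show ((N + 3 : ℕ) : ℤ) - 2 - ((i + 1 + 1 : ℕ) : ℤ) = ((N - 1 - i : ℕ) : ℤ) by omega,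
      efact_natCast, efact_natCast, show N + 3 - 1 = N + 2 by omega]
  rw [sum_range_succ, sum_range_succ', sum_range_succ', sum_congr rfl hmiddle,
    show ((N + 3 : ℕ) : ℤ) - 2 = ((N + 1 : ℕ) : ℤ) by push_cast; ring, efact_natCast]
  have hsecond : ((N + 2) * N ! : ℝ) ≤ 2 * (N + 1)! := by
    have hN! : (0 : ℝ) ≤ N ! := by positivity
    push_cast [Nat.factorial_succ]
    nlinarith
  have hlast : (N ! : ℝ) ≤ (N + 1)! := by exact_mod_cast Nat.factorial_le (Nat.le_succ N)
  calc _ = ∑ i ∈ range N, ((N + 2).choose (i + 2) * i ! * (N - 1 - i)! : ℝ) +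
          (N + 2) * N ! + (N + 1)! + N ! := by
        rw [Nat.cast_zero, sub_zero, efact_natCast]
        simp [efact_natCast, efact_of_neg]
    _ ≤ 7 * (N + 1)! := by
        linarith [sum_range_choose_mul_factorial_mul_factorial_le N]
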